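/- Let g(z) = a·z + b with a, b ∈ ℂ. Then V_g : F^∞_{ψ_m} → F^∞_{ψ_m} is a compact operator: if (f_j) is a sequence in F^∞_{ψ_m} with sup_j ‖f_j‖_{(m,∞)} < ∞ and f_j → 0 uniformly on compact subsets of ℂ, then ‖V_g f_j‖_{(m,∞)} → 0. -/

import Mathlib

/-! For affine `g`, `V_g f(z) = a z ∫₀¹ f(tz) dt`. On a disc `|z| ≤ R` the weighted size of
`V_g f_j` is controlled by `sup_{|w| ≤ R} |f_j w|`, which tends to `0`. Outside the disc only
`|f_j w| ≤ N e^{ψ_m(w)}` is used: along the segment,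
`e^{ψ_m(tz)} ≤ e^{ψ_m(z)} ((1+|z|)^m e^{-3|z|²/8} + 2^m e^{-(1-t)|z|²/2})`
(split at `t = 1/2`), so `|z| e^{-ψ_m(z)} ∫₀¹ e^{ψ_m(tz)} dt = O(|z|^{m+1} e^{-3|z|²/8} + 1/|z|)`,
which is small once `R` is large. -/

open MeasureTheory

/-- The weight function ψ_m(z) = |z|²/2 − m·log(1+|z|). -/
noncomputable def psi (m : ℕ) (z : ℂ) : ℝ :=
  ‖z‖ ^ 2 / 2 - m * Real.log (1 + ‖z‖)

/-- Integral of F along the segment from 0 to z. -/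
noncomputable def lineInt (F : ℂ → ℂ) (z : ℂ) : ℂ :=
  (∫ t in (0:ℝ)..1, F (t * z)) * z

/-- The Volterra-type operator V_g f(z) = ∫₀^z f(w) g'(w) dw. -/
noncomputable def Vg (g f : ℂ → ℂ) : ℂ → ℂ :=
  lineInt fun w => f w * deriv g w

open Real Filter Topology Set

lemma Vg_affine (a b : ℂ) (f : ℂ → ℂ) :
    Vg (fun w => a * w + b) f = lineInt fun w => f w * a := by
  have : deriv (fun w : ℂ => a * w + b) = fun _ => a := by
    funext w
    simp
  rw [Vg, this]

lemma norm_lineInt_le {F : ℂ → ℂ} {G : ℝ → ℝ} {z : ℂ} (hG : IntervalIntegrable G volume 0 1)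
    (hFG : ∀ t ∈ Icc (0:ℝ) 1, ‖F (t * z)‖ ≤ G t) :
    ‖lineInt F z‖ ≤ (∫ t in (0:ℝ)..1, G t) * ‖z‖ := by
  rw [lineInt, norm_mul]
  gcongr
  exact intervalIntegral.norm_integral_le_of_norm_le zero_le_one
    (ae_of_all _ fun t ht => hFG t (Ioc_subset_Icc_self ht)) hG

lemma norm_ofReal_mul {t : ℝ} (ht : 0 ≤ t) (z : ℂ) : ‖(t : ℂ) * z‖ = t * ‖z‖ := by
  rw [norm_mul, Complex.norm_of_nonneg ht]

lemma psi_add_log_eq (m : ℕ) (z : ℂ) : psi m z + m * log (1 + ‖z‖) = ‖z‖ ^ 2 / 2 := by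
  rw [psi]
  ring

lemma psi_le (m : ℕ) (z : ℂ) : psi m z ≤ ‖z‖ ^ 2 / 2 := by
  have : 0 ≤ (m : ℝ) * log (1 + ‖z‖) := by
    have := log_nonneg (le_add_of_nonneg_right (norm_nonneg z))
    positivity
  linarith [psi_add_log_eq m z]

lemma exp_neg_psi_le (m : ℕ) (z : ℂ) : exp (-psi m z) ≤ (1 + ‖z‖) ^ m := by
  calc exp (-psi m z) ≤ exp (m * log (1 + ‖z‖)) := by
        gcongr
        linarith [psi_add_log_eq m z, sq_nonneg ‖z‖]
    _ = (1 + ‖z‖) ^ m := by rw [exp_nat_mul, exp_log (by positivity)]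

lemma psi_ofReal_mul_le_of_le_half (m : ℕ) {t : ℝ} (ht₀ : 0 ≤ t) (ht : t ≤ 1 / 2) (z : ℂ) :
    psi m (t * z) ≤ psi m z + (m * log (1 + ‖z‖) + -(3 / 8) * ‖z‖ ^ 2) := by
  have h := psi_le m (t * z)
  rw [norm_ofReal_mul ht₀] at h
  have : t ^ 2 * ‖z‖ ^ 2 ≤ (1 / 4) * ‖z‖ ^ 2 := by gcongr; nlinarith
  linarith [psi_add_log_eq m z]

lemma psi_ofReal_mul_le_of_half_le (m : ℕ) {t : ℝ} (ht : 1 / 2 ≤ t) (ht₁ : t ≤ 1) (z : ℂ) :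
    psi m (t * z) ≤ psi m z + (m * log 2 + (t - 1) * (‖z‖ ^ 2 / 2)) := by
  have ht₀ : 0 ≤ t := by linarith
  have hlog : log (1 + ‖z‖) ≤ log 2 + log (1 + t * ‖z‖) := by
    rw [← log_mul two_ne_zero (by positivity)]
    gcongr
    nlinarith [norm_nonneg z]
  have hsq : t ^ 2 * ‖z‖ ^ 2 ≤ t * ‖z‖ ^ 2 := by gcongr; nlinarith
  rw [psi, psi, norm_ofReal_mul ht₀]
  nlinarith [mul_le_mul_of_nonneg_left hlog (Nat.cast_nonneg (α := ℝ) m)]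

lemma exp_psi_ofReal_mul_le (m : ℕ) {t : ℝ} (ht : t ∈ Icc (0:ℝ) 1) (z : ℂ) :
    exp (psi m (t * z)) ≤ exp (psi m z) *
      ((1 + ‖z‖) ^ m * exp (-(3 / 8) * ‖z‖ ^ 2) + 2 ^ m * exp ((t - 1) * (‖z‖ ^ 2 / 2))) := by
  rcases le_total t (1 / 2) with hsmall | hlarge
  · calc exp (psi m (t * z))
        ≤ exp (psi m z + (m * log (1 + ‖z‖) + -(3 / 8) * ‖z‖ ^ 2)) :=
          exp_le_exp.2 (psi_ofReal_mul_le_of_le_half m ht.1 hsmall z)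
      _ = exp (psi m z) * ((1 + ‖z‖) ^ m * exp (-(3 / 8) * ‖z‖ ^ 2)) := by
          rw [exp_add, exp_add, exp_nat_mul, exp_log (by positivity)]
      _ ≤ _ := by gcongr; exact le_add_of_nonneg_right (by positivity)
  · calc exp (psi m (t * z))
        ≤ exp (psi m z + (m * log 2 + (t - 1) * (‖z‖ ^ 2 / 2))) :=
          exp_le_exp.2 (psi_ofReal_mul_le_of_half_le m hlarge ht.2 z)
      _ = exp (psi m z) * (2 ^ m * exp ((t - 1) * (‖z‖ ^ 2 / 2))) := by
          rw [exp_add, exp_add, exp_nat_mul, exp_log two_pos]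
      _ ≤ _ := by gcongr; exact le_add_of_nonneg_left (by positivity)

lemma integral_exp_sub_one_mul_le {c : ℝ} (hc : 0 < c) :
    ∫ t in (0:ℝ)..1, exp ((t - 1) * c) ≤ c⁻¹ := by
  simp_rw [show ∀ t : ℝ, (t - 1) * c = c * t - c from fun t => by ring]
  rw [intervalIntegral.integral_comp_mul_sub (f := exp) hc.ne', integral_exp, smul_eq_mul,
    mul_one, sub_self, exp_zero, mul_zero, zero_sub]
  exact mul_le_of_le_one_right (inv_nonneg.2 hc.le) (by linarith [exp_pos (-c)])

lemma norm_Vg_affine_mul_exp_neg_psi_le_of_closedBall (m : ℕ) (a b : ℂ) {f : ℂ → ℂ} {R δ : ℝ}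
    (hf : ∀ w ∈ Metric.closedBall (0 : ℂ) R, ‖f w‖ ≤ δ) {z : ℂ} (hz : ‖z‖ ≤ R) :
    ‖Vg (fun w => a * w + b) f z‖ * exp (-psi m z) ≤ ‖a‖ * δ * R * (1 + R) ^ m := by
  have hR : 0 ≤ R := (norm_nonneg z).trans hz
  have hδ : 0 ≤ δ := (norm_nonneg _).trans (hf 0 (by simpa using hR))
  have hV : ‖Vg (fun w => a * w + b) f z‖ ≤ ‖a‖ * δ * R := by
    rw [Vg_affine]
    refine (norm_lineInt_le (G := fun _ => ‖a‖ * δ) intervalIntegrable_const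
      fun t ht => ?_).trans ?_
    · rw [norm_mul, mul_comm]
      refine mul_le_mul_of_nonneg_left (hf _ ?_) (norm_nonneg a)
      rw [mem_closedBall_zero_iff, norm_ofReal_mul ht.1]
      nlinarith [norm_nonneg z, ht.2]
    · simp only [intervalIntegral.integral_const, sub_zero, one_smul]
      gcongr
  calc ‖Vg (fun w => a * w + b) f z‖ * exp (-psi m z) ≤ (‖a‖ * δ * R) * (1 + ‖z‖) ^ m :=
        mul_le_mul hV (exp_neg_psi_le m z) (exp_pos _).le (by positivity)
    _ ≤ ‖a‖ * δ * R * (1 + R) ^ m := by gcongr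

lemma norm_Vg_affine_mul_exp_neg_psi_le_tail (m : ℕ) (a b : ℂ) {f : ℂ → ℂ} {N : ℝ}
    (hf : ∀ w, ‖f w‖ * exp (-psi m w) ≤ N) {z : ℂ} (hz : z ≠ 0) :
    ‖Vg (fun w => a * w + b) f z‖ * exp (-psi m z) ≤
      ‖a‖ * N * (‖z‖ * (1 + ‖z‖) ^ m * exp (-(3 / 8) * ‖z‖ ^ 2) + 2 ^ (m + 1) / ‖z‖) := by
  set r := ‖z‖
  have hr₀ : 0 < r := norm_pos_iff.2 hz
  set A := (1 + r) ^ m * exp (-(3 / 8) * r ^ 2)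
  set c := r ^ 2 / 2
  have hN : 0 ≤ N := (by positivity : (0:ℝ) ≤ ‖f 0‖ * exp (-psi m 0)).trans (hf 0)
  have hfw : ∀ w, ‖f w‖ ≤ N * exp (psi m w) := fun w => by
    simpa [mul_assoc, ← exp_add] using mul_le_mul_of_nonneg_right (hf w) (exp_pos (psi m w)).le
  have hV : ‖Vg (fun w => a * w + b) f z‖ ≤
      (∫ t in (0:ℝ)..1, ‖a‖ * N * exp (psi m z) * (A + 2 ^ m * exp ((t - 1) * c))) * r := by
    rw [Vg_affine]
    refine norm_lineInt_le (Continuous.intervalIntegrable (by fun_prop) 0 1) fun t ht => ?_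
    calc ‖f (t * z) * a‖ = ‖a‖ * ‖f (t * z)‖ := by rw [norm_mul, mul_comm]
      _ ≤ ‖a‖ * (N * exp (psi m (t * z))) := by gcongr; exact hfw _
      _ ≤ ‖a‖ * (N * (exp (psi m z) * (A + 2 ^ m * exp ((t - 1) * c)))) := by
          gcongr; exact exp_psi_ofReal_mul_le m ht z
      _ = _ := by ring
  have hI : ∫ t in (0:ℝ)..1, ‖a‖ * N * exp (psi m z) * (A + 2 ^ m * exp ((t - 1) * c)) ≤
      ‖a‖ * N * exp (psi m z) * (A + 2 ^ m * c⁻¹) := by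
    rw [intervalIntegral.integral_const_mul, intervalIntegral.integral_add intervalIntegrable_const
      (Continuous.intervalIntegrable (by fun_prop) 0 1), intervalIntegral.integral_const,
      intervalIntegral.integral_const_mul]
    simp only [sub_zero, one_smul]
    gcongr
    exact integral_exp_sub_one_mul_le (by positivity)
  calc ‖Vg (fun w => a * w + b) f z‖ * exp (-psi m z)
      ≤ ‖a‖ * N * exp (psi m z) * (A + 2 ^ m * c⁻¹) * r * exp (-psi m z) := by
        gcongr
        exact hV.trans (mul_le_mul_of_nonneg_right hI hr₀.le)
    _ = ‖a‖ * N * (r * (1 + r) ^ m * exp (-(3 / 8) * r ^ 2) + 2 ^ (m + 1) / r) := by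
        simp only [A, c, exp_neg]
        field_simp
        ring

lemma tendsto_gaussian_tail (m : ℕ) :
    Tendsto (fun r : ℝ => r * (1 + r) ^ m * exp (-(3 / 8) * r ^ 2) + 2 ^ (m + 1) / r)
      atTop (𝓝 0) := by
  have hpoly := Polynomial.tendsto_div_exp_atTop (Polynomial.X * (1 + Polynomial.X) ^ m)
  simp only [Polynomial.eval_mul, Polynomial.eval_X, Polynomial.eval_pow, Polynomial.eval_add,
    Polynomial.eval_one] at hpoly
  have hgauss : Tendsto (fun r : ℝ => r * (1 + r) ^ m * exp (-(3 / 8) * r ^ 2)) atTop (𝓝 0) := by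
    refine squeeze_zero' ?_ ?_ hpoly
    · filter_upwards [eventually_ge_atTop 0] with r hr
      positivity
    · filter_upwards [eventually_ge_atTop (8 / 3)] with r hr
      rw [div_eq_mul_inv _ (exp r), ← exp_neg]
      gcongr
      nlinarith
  simpa using hgauss.add (tendsto_const_nhds.div_atTop tendsto_id)

theorem stmt_13_general (m : ℕ) (a b : ℂ) (f : ℕ → ℂ → ℂ)
    (N : ℝ)
    (hbd : ∀ j z, ‖f j z‖ * Real.exp (-psi m z) ≤ N)
    (hconv : ∀ K : Set ℂ, IsCompact K →
      TendstoUniformlyOn (fun j z => f j z) 0 Filter.atTop K) :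
    ∀ ε > (0 : ℝ), ∃ J : ℕ, ∀ j ≥ J, ∀ z : ℂ,
      ‖Vg (fun w => a * w + b) (f j) z‖ * Real.exp (-psi m z) ≤ ε := by
  intro ε hε
  have htail := (tendsto_gaussian_tail m).const_mul (‖a‖ * N)
  rw [mul_zero] at htail
  obtain ⟨R, hR⟩ := eventually_atTop.1
    ((htail.eventually (ge_mem_nhds hε)).and (eventually_gt_atTop 0))
  have hR₀ : 0 < R := (hR R le_rfl).2
  set δ := ε / (‖a‖ * R * (1 + R) ^ m + 1)
  have hδ : ‖a‖ * δ * R * (1 + R) ^ m ≤ ε := by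
    rw [show ‖a‖ * δ * R * (1 + R) ^ m = (‖a‖ * R * (1 + R) ^ m) * δ by ring,
      mul_div_assoc', div_le_iff₀ (by positivity)]
    nlinarith
  obtain ⟨J, hJ⟩ := eventually_atTop.1 <| Metric.tendstoUniformlyOn_iff.1
    (hconv _ (isCompact_closedBall 0 R)) δ (by positivity)
  refine ⟨J, fun j hj z => ?_⟩
  rcases le_or_gt ‖z‖ R with hz | hz
  · refine (norm_Vg_affine_mul_exp_neg_psi_le_of_closedBall m a b (fun w hw => ?_) hz).trans hδ
    simpa using (hJ j hj w hw).le
  · exact (norm_Vg_affine_mul_exp_neg_psi_le_tail m a b (hbd j)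
      (norm_pos_iff.1 (hR₀.trans hz))).trans (hR _ hz.le).1

/-- For g(z) = az+b, the operator V_g is compact on F^∞_{ψ_m}: any bounded sequence
converging to 0 uniformly on compacts has ‖V_g f_j‖_{(m,∞)} → 0. -/
theorem stmt_13 (m : ℕ) (a b : ℂ) (f : ℕ → ℂ → ℂ)
    (hdiff : ∀ j, Differentiable ℂ (f j)) (N : ℝ)
    (hbd : ∀ j z, ‖f j z‖ * Real.exp (-psi m z) ≤ N)
    (hconv : ∀ K : Set ℂ, IsCompact K →
      TendstoUniformlyOn (fun j z => f j z) 0 Filter.atTop K) :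
    ∀ ε > (0 : ℝ), ∃ J : ℕ, ∀ j ≥ J, ∀ z : ℂ,
      ‖Vg (fun w => a * w + b) (f j) z‖ * Real.exp (-psi m z) ≤ ε :=
  stmt_13_general m a b f N hbd hconv
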